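/- arXiv:2304.09055 — 3 statements merged into one kernel-verified Lean document; each statement's English description precedes it below -/
import Mathlib

section
/- Let ν ∈ [0, 1/4] and let v₁, …, v_l be nonzero vectors in ℝⁿ such that for all j ∈ {1, …, l−1}, ‖P_{span(v₁,…,v_j)} v_{j+1}‖₂ ≤ (ν/√l)·‖v_{j+1}‖₂, where P_F denotes the orthogonal projection onto the subspace F. Then (v₁, …, v_l) is a (2ν)-almost orthogonal system. Moreover, if V is the n×l matrix with columns v₁, …, v_l, then det(VᵀV)^{1/2} ≥ 2^{−l} · ∏_{j=1}^{l} ‖v_j‖₂. -/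
open MeasureTheory Matrix Finset RealInnerProductSpace

/-- `ν`-almost orthogonal system: all singular values of the matrix whose columns are
the normalized vectors lie in `[1-ν, 1+ν]`. -/
noncomputable def AlmostOrth {n l : ℕ} (ν : ℝ) (v : Fin l → EuclideanSpace ℝ (Fin n)) : Prop :=
  (∀ j, v j ≠ 0) ∧
  ∀ θ : EuclideanSpace ℝ (Fin l),
    (1 - ν) * ‖θ‖ ≤ ‖∑ j, θ j • (‖v j‖⁻¹ • v j)‖ ∧
    ‖∑ j, θ j • (‖v j‖⁻¹ • v j)‖ ≤ (1 + ν) * ‖θ‖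

/-! The Gram–Schmidt vector `g j` is `v j` minus its projection onto the span of the earlier
vectors, so the hypothesis reads `‖v j - g j‖ ≤ ν/√l · ‖v j‖`, whence
`(1 - ν)‖v j‖ ≤ ‖g j‖ ≤ ‖v j‖`. The pairwise orthogonal vectors `g j / ‖v j‖` have norms in
`[1 - ν, 1]`, so `‖∑ θ j • g j / ‖v j‖‖` lies between `(1 - ν)‖θ‖` and `‖θ‖`; replacing them by
`v j / ‖v j‖` moves the sum by at most `ν/√l · ∑ |θ j| ≤ ν‖θ‖` (Cauchy–Schwarz). Since `v` is a
unitriangular combination of `g`, the Gram determinant of `v` is `∏ ‖g j‖²`, and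
`‖g j‖ ≥ (1 - ν)‖v j‖ ≥ ‖v j‖ / 2`. -/

open InnerProductSpace Submodule

section GramSchmidt

variable {𝕜 E ι : Type*} [RCLike 𝕜] [NormedAddCommGroup E] [InnerProductSpace 𝕜 E]
  [LinearOrder ι] [LocallyFiniteOrderBot ι] [WellFoundedLT ι]

theorem sub_gramSchmidt_mem_span_image_Iio (f : ι → E) (j : ι) :
    f j - gramSchmidt 𝕜 f j ∈ span 𝕜 (f '' Set.Iio j) := by
  rw [← span_gramSchmidt_Iio 𝕜 f j, gramSchmidt_def 𝕜 f j, sub_sub_cancel]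
  refine sum_mem fun i hi => ?_
  have hle : 𝕜 ∙ gramSchmidt 𝕜 f i ≤ span 𝕜 (gramSchmidt 𝕜 f '' Set.Iio j) :=
    span_mono (Set.singleton_subset_iff.2 ⟨i, mem_Iio.1 hi, rfl⟩)
  exact hle (coe_mem _)

theorem inner_gramSchmidt_eq_zero_of_mem_span_image_Iio (f : ι → E) {j : ι} {x : E}
    (hx : x ∈ span 𝕜 (f '' Set.Iio j)) : inner 𝕜 (gramSchmidt 𝕜 f j) x = 0 := by
  have hle : span 𝕜 (f '' Set.Iio j) ≤ (𝕜 ∙ gramSchmidt 𝕜 f j)ᗮ := span_le.2 <| by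
    rintro _ ⟨i, hi, rfl⟩
    exact mem_orthogonal_singleton_iff_inner_right.2 (gramSchmidt_inv_triangular 𝕜 f hi)
  exact mem_orthogonal_singleton_iff_inner_right.1 (hle hx)

theorem starProjection_span_image_Iio (f : ι → E) (j : ι)
    [(span 𝕜 (f '' Set.Iio j)).HasOrthogonalProjection] :
    (span 𝕜 (f '' Set.Iio j)).starProjection (f j) = f j - gramSchmidt 𝕜 f j :=
  eq_starProjection_of_mem_of_inner_eq_zero (sub_gramSchmidt_mem_span_image_Iio f j)
    fun _ hw => by
      rw [sub_sub_cancel]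
      exact inner_gramSchmidt_eq_zero_of_mem_span_image_Iio f hw

theorem norm_gramSchmidt_le (f : ι → E) (j : ι) : ‖gramSchmidt 𝕜 f j‖ ≤ ‖f j‖ := by
  have hpyth := norm_add_sq_eq_norm_sq_add_norm_sq_of_inner_eq_zero (𝕜 := 𝕜) _ _
    (inner_gramSchmidt_eq_zero_of_mem_span_image_Iio f (sub_gramSchmidt_mem_span_image_Iio f j))
  rw [add_sub_cancel] at hpyth
  rw [mul_self_le_mul_self_iff (norm_nonneg _) (norm_nonneg _), hpyth]
  exact le_add_of_nonneg_right (mul_self_nonneg _)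

end GramSchmidt

section Gram

variable {E ι κ : Type*} [NormedAddCommGroup E] [InnerProductSpace ℝ E]

theorem Matrix.gram_eq_diagonal_of_pairwise_orthogonal [DecidableEq ι] {w : ι → E}
    (hw : Pairwise fun i j => ⟪w i, w j⟫ = 0) : gram ℝ w = diagonal fun i => ‖w i‖ ^ 2 := by
  ext i j
  rcases eq_or_ne i j with rfl | hij
  · simp [gram_apply]
  · simp [gram_apply, hw hij, hij]

variable [Fintype ι]

theorem Matrix.gram_eq_mul_gram_mul_transpose {v : κ → E} {w : ι → E} (A : Matrix κ ι ℝ)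
    (hvw : ∀ i, v i = ∑ k, A i k • w k) : gram ℝ v = A * gram ℝ w * Aᵀ := by
  ext i j
  simp only [gram_apply, hvw, sum_inner, inner_sum, real_inner_smul_left, real_inner_smul_right,
    mul_apply, transpose_apply, Finset.sum_mul]
  exact sum_congr rfl fun _ _ => sum_congr rfl fun _ _ => by ring

variable [LinearOrder ι] [LocallyFiniteOrderBot ι]

theorem exists_isLowerTriangular_eq_sum_smul_gramSchmidt (f : ι → E) :
    ∃ A : Matrix ι ι ℝ, A.IsLowerTriangular ∧ (∀ i, A i i = 1) ∧
      ∀ i, f i = ∑ k, A i k • gramSchmidt ℝ f k := by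
  classical
  refine ⟨1 + of fun i k => if k < i then ⟪gramSchmidt ℝ f k, f i⟫ / ‖gramSchmidt ℝ f k‖ ^ 2
    else 0, fun i k hik => ?_, fun i => by simp, fun i => ?_⟩
  · have hik : i < k := hik
    simp [one_apply, hik.ne, hik.not_gt]
  · simp only [Matrix.add_apply, add_smul, sum_add_distrib, one_apply, ite_smul, one_smul,
      zero_smul, sum_ite_eq, mem_univ, if_true, of_apply]
    conv_lhs => rw [gramSchmidt_def'' ℝ f i]
    rw [← sum_filter, filter_gt_eq_Iio]
    simp

theorem det_gram_eq_prod_norm_gramSchmidt_sq (f : ι → E) :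
    (gram ℝ f).det = ∏ i, ‖gramSchmidt ℝ f i‖ ^ 2 := by
  classical
  obtain ⟨A, hA, hdiag, hexp⟩ := exists_isLowerTriangular_eq_sum_smul_gramSchmidt f
  have hdetA : A.det = 1 := by
    rw [det_of_isLowerTriangular A hA]
    exact prod_eq_one fun i _ => hdiag i
  rw [gram_eq_mul_gram_mul_transpose A hexp,
    gram_eq_diagonal_of_pairwise_orthogonal (gramSchmidt_pairwise_orthogonal ℝ f),
    det_mul, det_mul, det_transpose, hdetA, det_diagonal, one_mul, mul_one]

end Gram

section CoefficientBounds

variable {ι : Type*} [Fintype ι]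

theorem EuclideanSpace.sum_norm_le_sqrt_card_mul_norm {𝕜 : Type*} [RCLike 𝕜]
    (θ : EuclideanSpace 𝕜 ι) : ∑ i, ‖θ i‖ ≤ √(Fintype.card ι) * ‖θ‖ := by
  calc ∑ i, ‖θ i‖ ≤ √(Fintype.card ι * ‖θ‖ ^ 2) := by
        refine Real.le_sqrt_of_sq_le ?_
        rw [EuclideanSpace.norm_sq_eq]
        exact sq_sum_le_card_mul_sum_sq
    _ = √(Fintype.card ι) * ‖θ‖ := by
        rw [Real.sqrt_mul (Nat.cast_nonneg _), Real.sqrt_sq (norm_nonneg _)]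

theorem norm_sum_smul_le_of_norm_le {F : Type*} [SeminormedAddCommGroup F] [NormedSpace ℝ F]
    (θ : EuclideanSpace ℝ ι) {x : ι → F} {ε : ℝ} (hε : 0 ≤ ε) (hx : ∀ i, ‖x i‖ ≤ ε) :
    ‖∑ i, θ i • x i‖ ≤ ε * √(Fintype.card ι) * ‖θ‖ := by
  calc ‖∑ i, θ i • x i‖ ≤ ∑ i, ‖θ i‖ * ε :=
        (norm_sum_le _ _).trans <| sum_le_sum fun i _ => by
          rw [norm_smul]
          exact mul_le_mul_of_nonneg_left (hx i) (norm_nonneg _)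
    _ ≤ ε * √(Fintype.card ι) * ‖θ‖ := by
        rw [← sum_mul, mul_assoc, mul_comm ε]
        exact mul_le_mul_of_nonneg_right (EuclideanSpace.sum_norm_le_sqrt_card_mul_norm θ) hε

variable {E : Type*} [NormedAddCommGroup E] [InnerProductSpace ℝ E]

theorem norm_sum_smul_sq_of_pairwise_orthogonal {w : ι → E}
    (hw : Pairwise fun i j => ⟪w i, w j⟫ = 0) (c : ι → ℝ) :
    ‖∑ i, c i • w i‖ ^ 2 = ∑ i, c i ^ 2 * ‖w i‖ ^ 2 := by
  classical
  rw [← real_inner_self_eq_norm_sq, sum_inner]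
  refine sum_congr rfl fun i _ => ?_
  rw [inner_sum, sum_eq_single i (fun j _ hji => by simp [real_inner_smul_left,
    real_inner_smul_right, hw hji.symm]) (by simp), real_inner_smul_left, real_inner_smul_right,
    real_inner_self_eq_norm_sq]
  ring

theorem mul_norm_le_norm_sum_smul_of_pairwise_orthogonal {w : ι → E}
    (hw : Pairwise fun i j => ⟪w i, w j⟫ = 0) {a : ℝ} (hwa : ∀ i, a ≤ ‖w i‖)
    (θ : EuclideanSpace ℝ ι) : a * ‖θ‖ ≤ ‖∑ i, θ i • w i‖ := by
  rcases lt_or_ge a 0 with ha | ha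
  · exact (mul_nonpos_of_nonpos_of_nonneg ha.le (norm_nonneg _)).trans (norm_nonneg _)
  refine pow_le_pow_iff_left₀ (by positivity) (norm_nonneg _) two_ne_zero |>.1 ?_
  rw [norm_sum_smul_sq_of_pairwise_orthogonal hw, mul_pow, EuclideanSpace.real_norm_sq_eq,
    mul_sum]
  exact sum_le_sum fun i _ => by
    rw [mul_comm]
    exact mul_le_mul_of_nonneg_left (pow_le_pow_left₀ ha (hwa i) 2) (sq_nonneg _)

theorem norm_sum_smul_le_mul_norm_of_pairwise_orthogonal {w : ι → E}
    (hw : Pairwise fun i j => ⟪w i, w j⟫ = 0) {b : ℝ} (hb : 0 ≤ b) (hwb : ∀ i, ‖w i‖ ≤ b)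
    (θ : EuclideanSpace ℝ ι) : ‖∑ i, θ i • w i‖ ≤ b * ‖θ‖ := by
  refine pow_le_pow_iff_left₀ (norm_nonneg _) (by positivity) two_ne_zero |>.1 ?_
  rw [norm_sum_smul_sq_of_pairwise_orthogonal hw, mul_pow, EuclideanSpace.real_norm_sq_eq,
    mul_sum]
  exact sum_le_sum fun i _ => by
    rw [mul_comm (b ^ 2)]
    exact mul_le_mul_of_nonneg_left (pow_le_pow_left₀ (norm_nonneg _) (hwb i) 2) (sq_nonneg _)

end CoefficientBounds

theorem almostOrth_two_mul_of_pairwise_orthogonal {n l : ℕ}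
    {v w : Fin l → EuclideanSpace ℝ (Fin n)} {δ : ℝ} (hδ : 0 ≤ δ) (hv : ∀ j, v j ≠ 0)
    (hw : Pairwise fun i j => ⟪w i, w j⟫ = 0) (hlow : ∀ j, (1 - δ) * ‖v j‖ ≤ ‖w j‖)
    (hup : ∀ j, ‖w j‖ ≤ ‖v j‖) (hclose : ∀ j, ‖v j - w j‖ ≤ δ / √l * ‖v j‖) :
    AlmostOrth (2 * δ) v := by
  refine ⟨hv, fun θ => ?_⟩
  have hpos : ∀ j, 0 < ‖v j‖ := fun j => norm_pos_iff.2 (hv j)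
  set S := ∑ j, θ j • (‖v j‖⁻¹ • w j)
  set T := ∑ j, θ j • (‖v j‖⁻¹ • (v j - w j))
  have hsplit : ∑ j, θ j • (‖v j‖⁻¹ • v j) = S + T := by
    rw [← sum_add_distrib]
    simp only [← smul_add, add_sub_cancel]
  have hw' : Pairwise fun i j => ⟪‖v i‖⁻¹ • w i, ‖v j‖⁻¹ • w j⟫ = 0 := fun i j hij => by
    simp only [real_inner_smul_left, real_inner_smul_right, hw hij, mul_zero]
  have hS_lower : (1 - δ) * ‖θ‖ ≤ ‖S‖ :=
    mul_norm_le_norm_sum_smul_of_pairwise_orthogonal hw' (fun j => by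
      rw [norm_smul, norm_inv, norm_norm, le_inv_mul_iff₀ (hpos j), mul_comm]
      exact hlow j) θ
  have hS_upper : ‖S‖ ≤ 1 * ‖θ‖ :=
    norm_sum_smul_le_mul_norm_of_pairwise_orthogonal hw' zero_le_one (fun j => by
      rw [norm_smul, norm_inv, norm_norm, inv_mul_le_iff₀ (hpos j), mul_one]
      exact hup j) θ
  have hT : ‖T‖ ≤ δ / √l * √(Fintype.card (Fin l)) * ‖θ‖ :=
    norm_sum_smul_le_of_norm_le θ (by positivity) fun j => by
      rw [norm_smul, norm_inv, norm_norm, inv_mul_le_iff₀ (hpos j), mul_comm]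
      exact hclose j
  have hδl : δ / √l * √(Fintype.card (Fin l)) * ‖θ‖ ≤ δ * ‖θ‖ := by
    rw [Fintype.card_fin]
    refine mul_le_mul_of_nonneg_right ?_ (norm_nonneg _)
    rcases eq_or_ne (√l) 0 with hl | hl
    · simp [hl, hδ]
    · rw [div_mul_cancel₀ δ hl]
  have hST : ‖S‖ ≤ ‖S + T‖ + ‖T‖ := by
    simpa only [add_sub_cancel_right] using norm_sub_le (S + T) T
  rw [hsplit]
  constructor <;> linarith [norm_add_le S T, norm_nonneg θ]

/-- If each `v_{j+1}` has projection onto the span of the previous vectors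
of norm at most `(ν/√l)·‖v_{j+1}‖`, then the system is `2ν`-almost orthogonal, and the Gram
determinant satisfies `det(VᵀV)^{1/2} ≥ 2^{-l} ∏ ‖v_j‖`. -/
theorem almost_orthogonal_criterion {n l : ℕ} (ν : ℝ) (hν : ν ∈ Set.Icc (0:ℝ) (1/4))
    (v : Fin l → EuclideanSpace ℝ (Fin n)) (hv : ∀ j, v j ≠ 0)
    (hproj : ∀ j : Fin l,
      ‖(Submodule.orthogonalProjectionOnto (Submodule.span ℝ (v '' {i | i < j})) (v j) :
          EuclideanSpace ℝ (Fin n))‖ ≤ ν / Real.sqrt l * ‖v j‖) :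
    AlmostOrth (2 * ν) v ∧
    2 ^ (-(l:ℤ)) * ∏ j, ‖v j‖ ≤
      Real.sqrt (Matrix.det (Matrix.of fun i j : Fin l => ⟪v i, v j⟫)) := by
  obtain ⟨hν0, hν4⟩ := hν
  have hclose : ∀ j, ‖v j - gramSchmidt ℝ v j‖ ≤ ν / √l * ‖v j‖ := fun j => by
    rw [← starProjection_span_image_Iio, starProjection_apply]
    exact hproj j
  have hlow : ∀ j, (1 - ν) * ‖v j‖ ≤ ‖gramSchmidt ℝ v j‖ := fun j => by
    have hν_div : ν / √l ≤ ν :=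
      div_le_self hν0 (Real.one_le_sqrt.2 (Nat.one_le_cast.2 j.pos))
    nlinarith [norm_sub_norm_le (v j) (gramSchmidt ℝ v j), hclose j, norm_nonneg (v j)]
  refine ⟨almostOrth_two_mul_of_pairwise_orthogonal hν0 hv (gramSchmidt_pairwise_orthogonal ℝ v)
    hlow (norm_gramSchmidt_le v) hclose, ?_⟩
  calc 2 ^ (-(l:ℤ)) * ∏ j, ‖v j‖ = ∏ j, ‖v j‖ / 2 := by
        rw [prod_div_distrib, prod_const, card_univ, Fintype.card_fin, _root_.zpow_neg,
          zpow_natCast, div_eq_inv_mul]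
    _ ≤ ∏ j, ‖gramSchmidt ℝ v j‖ := prod_le_prod (fun _ _ => by positivity) fun j _ => by
        nlinarith [hlow j, norm_nonneg (v j)]
    _ = √(gram ℝ v).det := by
        rw [det_gram_eq_prod_norm_gramSchmidt_sq, prod_pow,
          Real.sqrt_sq (prod_nonneg fun _ _ => norm_nonneg _)]
end

section
/- Let s, α ∈ (0,1) and let L > 0. Let U be an n×l real matrix such that every unit vector in the image U·ℝˡ belongs to Incomp(s·n, α), i.e. U·ℝˡ ∩ S^{n−1} ⊂ Incomp(s·n, α). Then every θ ∈ ℝˡ with ‖Uθ‖₂ ≤ √(s·n)/2 satisfies dist(Uθ, ℤⁿ) ≥ L·√(log₊(α‖Uθ‖₂ / L)), where log₊(x) = max(log x, 0). -/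
open MeasureTheory Matrix Finset

noncomputable def e2norm {n : ℕ} (x : Fin n → ℝ) : ℝ := Real.sqrt (∑ i, x i ^ 2)

/-- Euclidean distance from a point to the integer lattice `ℤⁿ`. -/
noncomputable def latticeDist {n : ℕ} (x : Fin n → ℝ) : ℝ :=
  ⨅ z : Fin n → ℤ, e2norm (fun i => x i - (z i : ℝ))

noncomputable def logPlus (x : ℝ) : ℝ := max (Real.log x) 0

/-- Vectors with at most `s` nonzero coordinates. -/
def sparseSet (n : ℕ) (s : ℝ) : Set (Fin n → ℝ) :=
  {x | ((Finset.univ.filter fun i => x i ≠ 0).card : ℝ) ≤ s}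

/-- Compressible unit vectors: unit vectors within Euclidean distance `τ`
of the set of `s`-sparse vectors. -/
noncomputable def compSet (n : ℕ) (s τ : ℝ) : Set (Fin n → ℝ) :=
  {x | e2norm x = 1 ∧ sInf {d | ∃ y ∈ sparseSet n s, d = e2norm (x - y)} ≤ τ}

/-- Incompressible unit vectors. -/
noncomputable def incompSet (n : ℕ) (s τ : ℝ) : Set (Fin n → ℝ) :=
  {x | e2norm x = 1} \ compSet n s τ

/-!
Put `x = Uθ`. Since `log u ≤ u²`, one has `L √(log₊(t/L)) ≤ t` for `t ≥ 0`, so it suffices to show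
`dist(x, ℤⁿ) ≥ α‖x‖`. If an integer point `z` had `‖x - z‖ < α‖x‖ ≤ ‖x‖`, then `‖z‖ < 2‖x‖ ≤ √(sn)`;
an integer vector has at most `‖z‖²` nonzero coordinates, so `z` and `z / ‖x‖` are `sn`-sparse.
But `x / ‖x‖` is a unit vector of the image of `U`, hence at distance more than `α` from every
`sn`-sparse vector, whereas `‖x / ‖x‖ - z / ‖x‖‖ < α`.
-/

section

variable {n : ℕ}

lemma e2norm_eq_norm_toLp (x : Fin n → ℝ) : e2norm x = ‖WithLp.toLp 2 x‖ := by
  simp [e2norm, EuclideanSpace.norm_eq]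

lemma e2norm_nonneg (x : Fin n → ℝ) : 0 ≤ e2norm x := Real.sqrt_nonneg _

lemma e2norm_smul (c : ℝ) (x : Fin n → ℝ) : e2norm (c • x) = |c| * e2norm x := by
  simp only [e2norm_eq_norm_toLp, WithLp.toLp_smul, norm_smul, Real.norm_eq_abs]

lemma e2norm_le_add_e2norm_sub (x y : Fin n → ℝ) : e2norm y ≤ e2norm x + e2norm (x - y) := by
  simp only [e2norm_eq_norm_toLp, WithLp.toLp_sub]
  exact norm_le_norm_add_norm_sub _ _

lemma e2norm_inv_smul_self {x : Fin n → ℝ} (hx : 0 < e2norm x) :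
    e2norm ((e2norm x)⁻¹ • x) = 1 := by
  rw [e2norm_smul, abs_inv, abs_of_pos hx, inv_mul_cancel₀ hx.ne']

lemma smul_mem_sparseSet {s : ℝ} (c : ℝ) {x : Fin n → ℝ} (hx : x ∈ sparseSet n s) :
    c • x ∈ sparseSet n s := by
  have hsupp : (univ.filter fun i => (c • x) i ≠ 0) ⊆ univ.filter fun i => x i ≠ 0 := by
    intro i
    simp +contextual
  exact le_trans (by exact_mod_cast card_le_card hsupp) (show _ ≤ s from hx)

lemma card_support_le_e2norm_sq (z : Fin n → ℤ) :
    ((univ.filter fun i => (z i : ℝ) ≠ 0).card : ℝ) ≤ e2norm (fun i => (z i : ℝ)) ^ 2 := by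
  rw [e2norm, Real.sq_sqrt (by positivity)]
  calc ((univ.filter fun i => (z i : ℝ) ≠ 0).card : ℝ)
      ≤ ∑ i ∈ univ.filter fun i => (z i : ℝ) ≠ 0, (z i : ℝ) ^ 2 := by
        simpa using card_nsmul_le_sum _ (fun i => (z i : ℝ) ^ 2) 1 fun i hi => by
          have : z i ≠ 0 := by simpa using (mem_filter.1 hi).2
          exact_mod_cast (one_le_sq_iff_one_le_abs _).2 (Int.one_le_abs this)
    _ ≤ ∑ i, (z i : ℝ) ^ 2 :=
        sum_le_sum_of_subset_of_nonneg (filter_subset _ _) fun _ _ _ => sq_nonneg _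

lemma intCast_mem_sparseSet {s : ℝ} {z : Fin n → ℤ} (hz : e2norm (fun i => (z i : ℝ)) < √s) :
    (fun i => (z i : ℝ)) ∈ sparseSet n s :=
  (card_support_le_e2norm_sq z).trans ((Real.lt_sqrt (e2norm_nonneg _)).1 hz).le

lemma lt_e2norm_sub_of_mem_incompSet {s τ : ℝ} {x y : Fin n → ℝ} (hx : x ∈ incompSet n s τ)
    (hy : y ∈ sparseSet n s) : τ < e2norm (x - y) := by
  obtain ⟨hx1, hxc⟩ := hx
  have hbdd : BddBelow {d | ∃ y ∈ sparseSet n s, d = e2norm (x - y)} :=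
    ⟨0, by rintro d ⟨y, -, rfl⟩; exact e2norm_nonneg _⟩
  exact lt_of_not_ge fun h => hxc ⟨hx1, (csInf_le hbdd ⟨y, hy, rfl⟩).trans h⟩

lemma mul_e2norm_lt_e2norm_sub {s τ : ℝ} {x y : Fin n → ℝ} (hx : 0 < e2norm x)
    (hinc : (e2norm x)⁻¹ • x ∈ incompSet n s τ) (hy : y ∈ sparseSet n s) :
    τ * e2norm x < e2norm (x - y) := by
  have h := lt_e2norm_sub_of_mem_incompSet hinc (smul_mem_sparseSet (e2norm x)⁻¹ hy)
  rwa [← smul_sub, e2norm_smul, abs_inv, abs_of_pos hx, inv_mul_eq_div, lt_div_iff₀ hx] at h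

lemma mul_e2norm_le_latticeDist {s α : ℝ} {x : Fin n → ℝ} (hα : α ≤ 1)
    (hx : 2 * e2norm x ≤ √s) (hinc : 0 < e2norm x → (e2norm x)⁻¹ • x ∈ incompSet n s α) :
    α * e2norm x ≤ latticeDist x := by
  refine le_ciInf fun z => ?_
  set w : Fin n → ℝ := fun i => z i
  change α * e2norm x ≤ e2norm (x - w)
  rcases (e2norm_nonneg x).eq_or_lt with h0 | hpos
  · rw [← h0, mul_zero]
    exact e2norm_nonneg _
  refine le_of_not_gt fun hclose => ?_
  have hw : e2norm w < √s := calc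
    e2norm w ≤ e2norm x + e2norm (x - w) := e2norm_le_add_e2norm_sub x w
    _ < e2norm x + α * e2norm x := by gcongr
    _ ≤ 2 * e2norm x := by nlinarith
    _ ≤ √s := hx
  exact hclose.not_gt (mul_e2norm_lt_e2norm_sub hpos (hinc hpos) (intCast_mem_sparseSet hw))

end

lemma logPlus_le_sq {u : ℝ} (hu : 0 ≤ u) : logPlus u ≤ u ^ 2 := by
  refine max_le ?_ (sq_nonneg u)
  rcases hu.eq_or_lt with rfl | hpos
  · simp
  · nlinarith [Real.log_le_sub_one_of_pos hpos]

lemma mul_sqrt_logPlus_div_le {L t : ℝ} (hL : 0 < L) (ht : 0 ≤ t) :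
    L * √(logPlus (t / L)) ≤ t := by
  have htL : 0 ≤ t / L := div_nonneg ht hL.le
  calc L * √(logPlus (t / L)) ≤ L * (t / L) :=
        mul_le_mul_of_nonneg_left ((Real.sqrt_le_left htL).2 (logPlus_le_sq htL)) hL.le
    _ = t := mul_div_cancel₀ t hL.ne'

theorem lcd_of_incompressible_image_general {n l : ℕ} (s α L : ℝ)
    (hα : α ∈ Set.Ioo (0:ℝ) 1) (hL : 0 < L)
    (U : Matrix (Fin n) (Fin l) ℝ)
    (hU : ∀ θ : Fin l → ℝ, e2norm (U.mulVec θ) = 1 →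
      U.mulVec θ ∈ incompSet n (s * n) α) :
    ∀ θ : Fin l → ℝ, e2norm (U.mulVec θ) ≤ Real.sqrt (s * n) / 2 →
      L * Real.sqrt (logPlus (α * e2norm (U.mulVec θ) / L)) ≤ latticeDist (U.mulVec θ) := by
  intro θ hθ
  have hinc (hpos : 0 < e2norm (U *ᵥ θ)) :
      (e2norm (U *ᵥ θ))⁻¹ • (U *ᵥ θ) ∈ incompSet n (s * n) α := by
    rw [← mulVec_smul]
    exact hU _ (by rw [mulVec_smul]; exact e2norm_inv_smul_self hpos)
  calc L * √(logPlus (α * e2norm (U *ᵥ θ) / L)) ≤ α * e2norm (U *ᵥ θ) :=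
        mul_sqrt_logPlus_div_le hL (mul_nonneg hα.1.le (e2norm_nonneg _))
    _ ≤ latticeDist (U *ᵥ θ) := mul_e2norm_le_latticeDist hα.2.le (by linarith) hinc

/-- If every unit vector in the image of `U` is `(sn, α)`-incompressible,
then every `θ` with `‖Uθ‖₂ ≤ √(sn)/2` satisfies
`dist(Uθ, ℤⁿ) ≥ L·√(log₊(α‖Uθ‖₂/L))`. -/
theorem lcd_of_incompressible_image {n l : ℕ} (s α L : ℝ)
    (hs : s ∈ Set.Ioo (0:ℝ) 1) (hα : α ∈ Set.Ioo (0:ℝ) 1) (hL : 0 < L)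
    (U : Matrix (Fin n) (Fin l) ℝ)
    (hU : ∀ θ : Fin l → ℝ, e2norm (U.mulVec θ) = 1 →
      U.mulVec θ ∈ incompSet n (s * n) α) :
    ∀ θ : Fin l → ℝ, e2norm (U.mulVec θ) ≤ Real.sqrt (s * n) / 2 →
      L * Real.sqrt (logPlus (α * e2norm (U.mulVec θ) / L)) ≤ latticeDist (U.mulVec θ) :=
  lcd_of_incompressible_image_general s α L hα hL U hU
end

section
/- There exists an absolute constant C > 0 such that for any n ∈ ℕ and any R > 0, the number of integer points in the Euclidean ball of radius R centered at the origin satisfies |ℤⁿ ∩ B(0,R)| ≤ (2 + C·R/√n)ⁿ. -/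
/-!
Weight each lattice point `z` with `exp (s² (R² - ‖z‖²)) ≥ 1`, where `s > 0` is free. Summing over
all of `ℤⁿ` factorises the bound into `exp (s²R²) θ(s)ⁿ` with `θ(s) = ∑_{k ∈ ℤ} exp (-s²k²)`.
From `s²k² ≥ s|k| - 1/4`, `θ(s)` is at most `e^{1/4}` times a two-sided geometric series,
which is `≤ e^{1/4} (1 + 2/s)`. The choice `s = √n / (2R)` gives
`(e^{1/2} (1 + 4R/√n))ⁿ ≤ (2 + 8R/√n)ⁿ`.
-/

open Finset

open Real

lemma exp_neg_sq_le_exp_quarter_mul (s x : ℝ) :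
    exp (-(s * x) ^ 2) ≤ exp (1 / 4) * exp (-(s * |x|)) := by
  have : (s * |x|) ^ 2 = (s * x) ^ 2 := by rw [mul_pow, sq_abs, mul_pow]
  rw [← exp_add, exp_le_exp]
  nlinarith [sq_nonneg (s * |x| - 1 / 2)]

lemma hasSum_exp_neg_mul_abs_int {s : ℝ} (hs : 0 < s) :
    HasSum (fun k : ℤ ↦ exp (-(s * |(k : ℝ)|))) ((1 + exp (-s)) / (1 - exp (-s))) := by
  have hq : exp (-s) < 1 := exp_lt_one_iff.2 (neg_lt_zero.2 hs)
  have hgeom := hasSum_geometric_of_lt_one (exp_pos (-s)).le hq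
  have hpow (n : ℕ) : exp (-(s * n)) = exp (-s) ^ n := by
    rw [← exp_nat_mul]; ring_nf
  have hnonneg : HasSum (fun n : ℕ ↦ exp (-(s * |((n : ℤ) : ℝ)|))) (1 - exp (-s))⁻¹ := by
    refine hgeom.congr_fun fun n ↦ ?_
    rw [Int.cast_natCast, Nat.abs_cast, hpow]
  have hneg : HasSum (fun n : ℕ ↦ exp (-(s * |((-(n + 1) : ℤ) : ℝ)|)))
      (exp (-s) * (1 - exp (-s))⁻¹) := by
    refine (hgeom.mul_left (exp (-s))).congr_fun fun n ↦ ?_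
    rw [← pow_succ', ← hpow]
    push_cast
    rw [abs_neg, abs_of_pos (by positivity)]
  convert HasSum.of_nat_of_neg_add_one (f := fun k : ℤ ↦ exp (-(s * |(k : ℝ)|))) hnonneg hneg
    using 1
  field_simp

lemma one_add_exp_neg_div_le {s : ℝ} (hs : 0 < s) :
    (1 + exp (-s)) / (1 - exp (-s)) ≤ 1 + 2 / s := by
  have hexp : s + 1 ≤ exp s := add_one_le_exp s
  have hq : exp (-s) * exp s = 1 := by rw [← exp_add, neg_add_cancel, exp_zero]
  have hq1 : 0 < 1 - exp (-s) := by nlinarith [exp_pos (-s)]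
  have hqs : exp (-s) * (s + 1) ≤ 1 :=
    (mul_le_mul_of_nonneg_left hexp (exp_pos (-s)).le).trans_eq hq
  rw [div_le_iff₀ hq1, add_mul, one_mul, div_mul_eq_mul_div, ← sub_le_iff_le_add',
    le_div_iff₀ hs]
  linarith

lemma sum_exp_neg_sq_int_le {s : ℝ} (hs : 0 < s) (F : Finset ℤ) :
    ∑ k ∈ F, exp (-(s * k) ^ 2) ≤ exp (1 / 4) * (1 + 2 / s) :=
  calc ∑ k ∈ F, exp (-(s * k) ^ 2)
      ≤ ∑ k ∈ F, exp (1 / 4) * exp (-(s * |(k : ℝ)|)) :=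
        sum_le_sum fun k _ ↦ exp_neg_sq_le_exp_quarter_mul s k
    _ = exp (1 / 4) * ∑ k ∈ F, exp (-(s * |(k : ℝ)|)) := (mul_sum ..).symm
    _ ≤ exp (1 / 4) * ((1 + exp (-s)) / (1 - exp (-s))) := by
        gcongr
        exact sum_le_hasSum F (fun _ _ ↦ (exp_pos _).le) (hasSum_exp_neg_mul_abs_int hs)
    _ ≤ exp (1 / 4) * (1 + 2 / s) := by gcongr; exact one_add_exp_neg_div_le hs

lemma card_le_exp_mul_pow_of_sum_sq_le {ι : Type*} [Fintype ι] {s R : ℝ} (hs : 0 < s)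
    (T : Finset (ι → ℤ)) (hT : ∀ z ∈ T, ∑ i, (z i : ℝ) ^ 2 ≤ R ^ 2) :
    (#T : ℝ) ≤ exp ((s * R) ^ 2) * (exp (1 / 4) * (1 + 2 / s)) ^ Fintype.card ι := by
  classical
  set w : ℤ → ℝ := fun k ↦ exp (-(s * k) ^ 2)
  have one_le_weight : ∀ z ∈ T, 1 ≤ exp ((s * R) ^ 2) * ∏ i, w (z i) := by
    intro z hz
    rw [← exp_sum, ← exp_add, one_le_exp_iff, sum_neg_distrib]
    simp_rw [mul_pow, ← mul_sum]
    nlinarith [hT z hz, sq_nonneg s]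
  calc (#T : ℝ) = ∑ z ∈ T, 1 := by simp
    _ ≤ ∑ z ∈ T, exp ((s * R) ^ 2) * ∏ i, w (z i) := sum_le_sum one_le_weight
    _ ≤ ∑ z ∈ Fintype.piFinset fun i ↦ T.image (· i), exp ((s * R) ^ 2) * ∏ i, w (z i) :=
        sum_le_sum_of_subset_of_nonneg
          (fun z hz ↦ Fintype.mem_piFinset.2 fun i ↦ mem_image_of_mem _ hz)
          (fun _ _ _ ↦ by positivity)
    _ = exp ((s * R) ^ 2) * ∏ i, ∑ k ∈ T.image (· i), w k := by rw [prod_univ_sum, mul_sum]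
    _ ≤ exp ((s * R) ^ 2) * ∏ _i : ι, exp (1 / 4) * (1 + 2 / s) := by
        gcongr with i
        exact sum_exp_neg_sq_int_le hs _
    _ = exp ((s * R) ^ 2) * (exp (1 / 4) * (1 + 2 / s)) ^ Fintype.card ι := by
        rw [prod_const, card_univ]

lemma Set.natCard_le_of_forall_finset_card_le {α : Type*} {S : Set α} {B : ℝ}
    (h : ∀ T : Finset α, ↑T ⊆ S → (#T : ℝ) ≤ B) : (Nat.card S : ℝ) ≤ B := by
  rcases S.finite_or_infinite with hS | hS
  · rw [Nat.card_eq_card_finite_toFinset hS]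
    exact h _ hS.coe_toFinset.subset
  · rw [hS.card_eq_zero, Nat.cast_zero]
    simpa using h ∅ (by simp)

lemma exp_half_le_two : exp (1 / 2) ≤ 2 := by
  rw [exp_half, sqrt_le_left zero_le_two]
  linarith [exp_one_lt_d9]

/-- The number of integer points in the Euclidean ball of radius `R`
centered at the origin in `ℝⁿ` is at most `(2 + CR/√n)ⁿ`. -/
theorem integer_points_in_ball :
    ∃ C > (0:ℝ), ∀ (n : ℕ) (R : ℝ), 0 < R →
      (Nat.card {z : Fin n → ℤ | e2norm (fun i => (z i : ℝ)) ≤ R} : ℝ) ≤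
        (2 + C * R / Real.sqrt n) ^ n := by
  refine ⟨8, by norm_num, fun n R hR ↦ ?_⟩
  rcases n.eq_zero_or_pos with rfl | hn
  · rw [pow_zero]
    exact_mod_cast Finite.card_le_one_iff_subsingleton.2 inferInstance
  have hsqrt : 0 < √(n : ℝ) := sqrt_pos.2 (Nat.cast_pos.2 hn)
  set s := √(n : ℝ) / (2 * R)
  have hs : 0 < s := by positivity
  have hsR : (s * R) ^ 2 = n * (1 / 4) := by
    rw [show s * R = √n / 2 by simp only [s]; field_simp, div_pow, sq_sqrt n.cast_nonneg]
    ring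
  refine Set.natCard_le_of_forall_finset_card_le fun T hT ↦ ?_
  calc (#T : ℝ) ≤ exp ((s * R) ^ 2) * (exp (1 / 4) * (1 + 2 / s)) ^ n := by
        simpa using card_le_exp_mul_pow_of_sum_sq_le hs T
          fun z hz ↦ ((sqrt_le_left hR.le).1 (hT hz))
    _ = (exp (1 / 2) * (1 + 4 * R / √n)) ^ n := by
        have h2s : 2 / s = 4 * R / √n := by simp only [s]; field_simp; ring
        rw [hsR, exp_nat_mul, ← mul_pow, ← mul_assoc, ← exp_add, h2s]
        norm_num
    _ ≤ (2 + 8 * R / √n) ^ n := by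
        gcongr
        rw [mul_div_assoc, mul_div_assoc]
        have : 0 ≤ R / √n := by positivity
        nlinarith [exp_half_le_two]
end
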